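/- Fix positive reals l_i⁰, l_j⁰, l_k⁰. For conformal factors (u_i, u_j, u_k) define deformed edge lengths l_i = e^{u_j+u_k} l_i⁰, l_j = e^{u_i+u_k} l_j⁰, l_k = e^{u_i+u_j} l_k⁰, and suppose these satisfy the strict triangle inequality, with angles θ_i, θ_j, θ_k given by the cosine law. Then ∂θ_i/∂u_j = cot θ_k. -/

import Mathlib

noncomputable def angOpp (a b c : ℝ) : ℝ := Real.arccos ((b ^ 2 + c ^ 2 - a ^ 2) / (2 * b * c))

/-!
Varying `u_j` scales the two sides `l_i` and `l_k` by the same factor `e^t` and fixes `l_j`.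
Along this scaling the cosine law gives `d(cos θ_i) = -cos θ_k · l_i / l_k`; dividing by
`-sin θ_i` (derivative of `arccos`) and using the law of sines `l_k sin θ_i = l_i sin θ_k`
leaves `cot θ_k`.
-/

open Real

noncomputable def cosOpp (a b c : ℝ) : ℝ := (b ^ 2 + c ^ 2 - a ^ 2) / (2 * b * c)

lemma angOpp_eq_arccos_cosOpp (a b c : ℝ) : angOpp a b c = arccos (cosOpp a b c) := rfl

section Triangle

variable {a b c : ℝ}

lemma abs_cosOpp_lt_one (h1 : a < b + c) (h2 : b < c + a) (h3 : c < a + b) :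
    |cosOpp a b c| < 1 := by
  have hb : 0 < b := by linarith
  have hc : 0 < c := by linarith
  have hHeron : 0 < (a + b + c) * (b + c - a) * (c + a - b) * (a + b - c) := by
    apply_rules [mul_pos] <;> linarith
  rw [← sq_lt_one_iff_abs_lt_one, cosOpp, div_pow, div_lt_one (by positivity)]
  nlinarith [hHeron]

lemma cos_angOpp (h1 : a < b + c) (h2 : b < c + a) (h3 : c < a + b) :
    cos (angOpp a b c) = cosOpp a b c :=
  have h := abs_lt.1 (abs_cosOpp_lt_one h1 h2 h3)
  cos_arccos h.1.le h.2.le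

lemma sin_angOpp_pos (h1 : a < b + c) (h2 : b < c + a) (h3 : c < a + b) :
    0 < sin (angOpp a b c) := by
  rw [angOpp_eq_arccos_cosOpp, sin_arccos, sqrt_pos, sub_pos, sq_lt_one_iff_abs_lt_one]
  exact abs_cosOpp_lt_one h1 h2 h3

-- The radicand is `16 · area²` (Heron), symmetric in `a b c`: this gives the law of sines.
lemma two_mul_mul_sin_angOpp (hb : 0 < b) (hc : 0 < c) :
    2 * b * c * sin (angOpp a b c)
      = √(2 * (a ^ 2 * b ^ 2 + b ^ 2 * c ^ 2 + c ^ 2 * a ^ 2) - (a ^ 4 + b ^ 4 + c ^ 4)) := by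
  have hbc : 0 < 2 * b * c := by positivity
  rw [angOpp_eq_arccos_cosOpp, sin_arccos, ← sqrt_sq hbc.le, ← sqrt_mul (sq_nonneg _)]
  congr 1
  rw [cosOpp]
  field_simp
  ring

lemma mul_sin_angOpp_eq (ha : 0 < a) (hb : 0 < b) (hc : 0 < c) :
    c * sin (angOpp a b c) = a * sin (angOpp c a b) := by
  have hA := two_mul_mul_sin_angOpp (a := a) hb hc
  have hC := two_mul_mul_sin_angOpp (a := c) ha hb
  have hS : 2 * (c ^ 2 * a ^ 2 + a ^ 2 * b ^ 2 + b ^ 2 * c ^ 2) - (c ^ 4 + a ^ 4 + b ^ 4)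
      = 2 * (a ^ 2 * b ^ 2 + b ^ 2 * c ^ 2 + c ^ 2 * a ^ 2) - (a ^ 4 + b ^ 4 + c ^ 4) := by ring
  rw [hS] at hC
  exact mul_left_cancel₀ (by positivity : 2 * b ≠ 0) (by linear_combination hA - hC)

lemma hasDerivAt_cosOpp_scale_two_sides (ha : a ≠ 0) (hb : b ≠ 0) (hc : c ≠ 0) :
    HasDerivAt (fun s => cosOpp (s * a) b (s * c)) (-cosOpp c a b * a / c) 1 := by
  have hN : HasDerivAt (fun s => b ^ 2 + (s * c) ^ 2 - (s * a) ^ 2) (2 * c ^ 2 - 2 * a ^ 2) 1 := by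
    have := ((hasDerivAt_const (1 : ℝ) (b ^ 2)).add (((hasDerivAt_id' 1).mul_const c).pow 2)).sub
      (((hasDerivAt_id' 1).mul_const a).pow 2)
    exact this.congr_deriv (by ring)
  have hD : HasDerivAt (fun s => 2 * b * (s * c)) (2 * b * c) 1 := by
    simpa using ((hasDerivAt_id' 1).mul_const c).const_mul (2 * b)
  exact (hN.div hD (by simp [hb, hc])).congr_deriv (by simp only [cosOpp]; field_simp; ring)

lemma hasDerivAt_angOpp_scale_two_sides (h1 : a < b + c) (h2 : b < c + a) (h3 : c < a + b) :
    HasDerivAt (fun s => angOpp (s * a) b (s * c))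
      (cos (angOpp c a b) / sin (angOpp c a b)) 1 := by
  have ha : 0 < a := by linarith
  have hb : 0 < b := by linarith
  have hc : 0 < c := by linarith
  have hx := abs_lt.1 (abs_cosOpp_lt_one h1 h2 h3)
  have harccos := hasDerivAt_arccos hx.1.ne' hx.2.ne
  refine (harccos.comp_of_eq 1 (hasDerivAt_cosOpp_scale_two_sides ha.ne' hb.ne' hc.ne')
    (by simp)).congr_deriv ?_
  have hsin_i := sin_angOpp_pos h1 h2 h3
  have hsin_k := sin_angOpp_pos h3 h1 h2
  rw [← sin_arccos, ← angOpp_eq_arccos_cosOpp, cos_angOpp h3 h1 h2]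
  field_simp
  linear_combination (-cosOpp c a b) * mul_sin_angOpp_eq ha hb hc

end Triangle

theorem yamabe_dtheta_i_du_j_general
    (li0 lj0 lk0 : ℝ)
    (ui uj uk : ℝ)
    (li lj lk : ℝ)
    (hli : li = Real.exp (uj + uk) * li0)
    (hlj : lj = Real.exp (ui + uk) * lj0)
    (hlk : lk = Real.exp (ui + uj) * lk0)
    (h1 : li + lj > lk) (h2 : lj + lk > li) (h3 : lk + li > lj) :
    HasDerivAt
      (fun t : ℝ => angOpp (Real.exp (t + uk) * li0) (Real.exp (ui + uk) * lj0)
        (Real.exp (ui + t) * lk0))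
      (Real.cos (angOpp lk li lj) / Real.sin (angOpp lk li lj)) uj := by
  have hscale : (fun t => angOpp (exp (t + uk) * li0) (exp (ui + uk) * lj0) (exp (ui + t) * lk0))
      = (fun s => angOpp (s * li) lj (s * lk)) ∘ (fun t => exp (t - uj)) := by
    funext t
    simp only [Function.comp, hli, hlj, hlk, ← mul_assoc, ← exp_add]
    ring_nf
  have hexp : HasDerivAt (fun t => exp (t - uj)) 1 uj := by
    simpa using ((hasDerivAt_id' uj).sub_const uj).exp
  rw [hscale]
  exact ((hasDerivAt_angOpp_scale_two_sides h2 h3 h1).comp_of_eq uj hexp (by simp)).congr_deriv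
    (mul_one _)

/-- Euclidean discrete conformal deformation: `∂θ_i/∂u_j = cot θ_k`. -/
theorem yamabe_dtheta_i_du_j
    (li0 lj0 lk0 : ℝ) (hli0 : 0 < li0) (hlj0 : 0 < lj0) (hlk0 : 0 < lk0)
    (ui uj uk : ℝ)
    (li lj lk : ℝ)
    (hli : li = Real.exp (uj + uk) * li0)
    (hlj : lj = Real.exp (ui + uk) * lj0)
    (hlk : lk = Real.exp (ui + uj) * lk0)
    (h1 : li + lj > lk) (h2 : lj + lk > li) (h3 : lk + li > lj) :
    HasDerivAt
      (fun t : ℝ => angOpp (Real.exp (t + uk) * li0) (Real.exp (ui + uk) * lj0)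
        (Real.exp (ui + t) * lk0))
      (Real.cos (angOpp lk li lj) / Real.sin (angOpp lk li lj)) uj :=
  yamabe_dtheta_i_du_j_general li0 lj0 lk0 ui uj uk li lj lk hli hlj hlk h1 h2 h3
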